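/- arXiv:2006.02274 — 2 statements merged into one kernel-verified Lean document; each statement's English description precedes it below -/
import Mathlib

section
/- For all t ∈ [0,T] the following energy identity holds: ‖e_u'(t)‖_{A(t)}² + (1/2)·(d/dt)(‖e_w(t)‖_{A(t)}²) = −e_w'(t)ᵀM'(t)e_u(t) − e_w'(t)ᵀM(t)d_u(t) − e_u'(t)ᵀA'(t)e_u(t) + e_u'(t)ᵀM'(t)e_w(t) + (1/2)·e_w(t)ᵀA'(t)e_w(t) + e_w'(t)ᵀF(t) − e_u'(t)ᵀG'(t) + e_u'(t)ᵀM'(t)d_w(t) + e_u'(t)ᵀM(t)d_w'(t). (Obtained by differentiating the second error equation in time, testing the first error equation with e_w' and the differentiated second equation with e_u', and subtracting; the mixed mass terms cancel by symmetry of M(t).) -/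
open Matrix Set

lemma hasDerivAt_dot {N : ℕ} {f g : ℝ → Fin N → ℝ} {f' g' : Fin N → ℝ} {t : ℝ}
    (hf : HasDerivAt f f' t) (hg : HasDerivAt g g' t) :
    HasDerivAt (fun s => f s ⬝ᵥ g s) (f' ⬝ᵥ g t + f t ⬝ᵥ g') t := by
  simp only [dotProduct]
  rw [← Finset.sum_add_distrib]
  exact HasDerivAt.fun_sum (fun i _ =>
    ((hasDerivAt_pi.mp hf i).mul (hasDerivAt_pi.mp hg i)))

lemma hasDerivAt_dot_mulVec {N : ℕ} {f g : ℝ → Fin N → ℝ} {f' g' : Fin N → ℝ}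
    {P : ℝ → Matrix (Fin N) (Fin N) ℝ} {P' : Matrix (Fin N) (Fin N) ℝ} {t : ℝ}
    (hf : HasDerivAt f f' t) (hg : HasDerivAt g g' t)
    (hP : ∀ i j, HasDerivAt (fun s => P s i j) (P' i j) t) :
    HasDerivAt (fun s => f s ⬝ᵥ (P s).mulVec (g s))
      (f' ⬝ᵥ (P t).mulVec (g t) + f t ⬝ᵥ P'.mulVec (g t)
        + f t ⬝ᵥ (P t).mulVec g') t := by
  simp only [dotProduct, mulVec, Finset.mul_sum]
  rw [← Finset.sum_add_distrib, ← Finset.sum_add_distrib]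
  refine HasDerivAt.fun_sum (fun i _ => ?_)
  rw [← Finset.sum_add_distrib, ← Finset.sum_add_distrib]
  refine HasDerivAt.fun_sum (fun j _ => ?_)
  have := ((hasDerivAt_pi.mp hf i).fun_mul ((hP i j).fun_mul (hasDerivAt_pi.mp hg j)))
  refine this.congr_deriv ?_
  ring

lemma dot_mulVec_symm {N : ℕ} {P : Matrix (Fin N) (Fin N) ℝ} (hP : P.IsHermitian)
    (x y : Fin N → ℝ) : x ⬝ᵥ P.mulVec y = y ⬝ᵥ P.mulVec x := by
  simp only [dotProduct, mulVec, Finset.mul_sum]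
  rw [Finset.sum_comm]
  refine Finset.sum_congr rfl fun i _ => Finset.sum_congr rfl fun j _ => ?_
  rw [← hP.apply i j]
  simp [mul_comm, mul_left_comm]


/-- The quadratic form `zᵀ P z` associated with a square matrix `P`. -/
def qf {N : ℕ} (P : Matrix (Fin N) (Fin N) ℝ) (z : Fin N → ℝ) : ℝ :=
  z ⬝ᵥ P.mulVec z

/-- Common hypotheses on the error equations of the semi-discrete Cahn–Hilliard-type
system: `M`, `A` are `C¹` families of matrices, `M(t)` is symmetric positive definite,
`A(t)` is symmetric positive semidefinite, the functions `e_u, e_w, d_u, d_w, F, G` are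
`C¹` (with the indicated derivatives), and the two error equations hold on `[0, T]`. -/
def CHBasic {N : ℕ} (T : ℝ)
    (M A M' A' : ℝ → Matrix (Fin N) (Fin N) ℝ)
    (eu ew eu' ew' du dw du' dw' F G F' G' : ℝ → Fin N → ℝ)
    (ϑ : Fin N → ℝ) : Prop :=
  (∀ t ∈ Icc (0:ℝ) T, ∀ (i j : Fin N), HasDerivAt (fun s => M s i j) (M' t i j) t) ∧
  (∀ t ∈ Icc (0:ℝ) T, ∀ (i j : Fin N), HasDerivAt (fun s => A s i j) (A' t i j) t) ∧
  (∀ (i j : Fin N), ContinuousOn (fun s => M' s i j) (Icc (0:ℝ) T)) ∧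
  (∀ (i j : Fin N), ContinuousOn (fun s => A' s i j) (Icc (0:ℝ) T)) ∧
  (∀ t ∈ Icc (0:ℝ) T, (M t).PosDef) ∧
  (∀ t ∈ Icc (0:ℝ) T, (A t).PosSemidef) ∧
  (∀ t ∈ Icc (0:ℝ) T, HasDerivAt eu (eu' t) t) ∧
  (∀ t ∈ Icc (0:ℝ) T, HasDerivAt ew (ew' t) t) ∧
  (∀ t ∈ Icc (0:ℝ) T, HasDerivAt du (du' t) t) ∧
  (∀ t ∈ Icc (0:ℝ) T, HasDerivAt dw (dw' t) t) ∧
  (∀ t ∈ Icc (0:ℝ) T, HasDerivAt F (F' t) t) ∧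
  (∀ t ∈ Icc (0:ℝ) T, HasDerivAt G (G' t) t) ∧
  ContinuousOn eu' (Icc (0:ℝ) T) ∧ ContinuousOn ew' (Icc (0:ℝ) T) ∧
  ContinuousOn du' (Icc (0:ℝ) T) ∧ ContinuousOn dw' (Icc (0:ℝ) T) ∧
  ContinuousOn F' (Icc (0:ℝ) T) ∧ ContinuousOn G' (Icc (0:ℝ) T) ∧
  (∀ t ∈ Icc (0:ℝ) T,
      (M t).mulVec (eu' t) + (A t).mulVec (ew t)
        = F t - (M' t).mulVec (eu t) - (M t).mulVec (du t)) ∧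
  (∀ t ∈ Icc (0:ℝ) T,
      (M t).mulVec (ew t) - (A t).mulVec (eu t)
        = G t - (M t).mulVec (dw t) + ϑ)

/-- Energy identity (ii.b) of the stability proof: differentiating the second error
equation in time, testing the first error equation with `e_w'` and the differentiated
second equation with `e_u'`, and subtracting, gives
`‖e_u'‖_{A(t)}² + (1/2)·(d/dt)(‖e_w‖_{A(t)}²)
  = −e_w'ᵀM'e_u − e_w'ᵀM d_u − e_u'ᵀA'e_u + e_u'ᵀM'e_w + (1/2)·e_wᵀA'e_w
    + e_w'ᵀF − e_u'ᵀG' + e_u'ᵀM' d_w + e_u'ᵀM d_w'`. -/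
theorem stmt7 {N : ℕ} (hN : 1 ≤ N) {T : ℝ} (hT : 0 < T)
    (M A M' A' : ℝ → Matrix (Fin N) (Fin N) ℝ)
    (eu ew eu' ew' du dw du' dw' F G F' G' : ℝ → Fin N → ℝ)
    (ϑ : Fin N → ℝ)
    (hyp : CHBasic T M A M' A' eu ew eu' ew' du dw du' dw' F G F' G' ϑ) :
    ∀ t ∈ Icc (0:ℝ) T,
      HasDerivAt (fun s => qf (A s) (ew s))
        (2 * ((-(ew' t ⬝ᵥ (M' t).mulVec (eu t))
              - ew' t ⬝ᵥ (M t).mulVec (du t)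
              - eu' t ⬝ᵥ (A' t).mulVec (eu t)
              + eu' t ⬝ᵥ (M' t).mulVec (ew t)
              + (1/2) * (ew t ⬝ᵥ (A' t).mulVec (ew t))
              + ew' t ⬝ᵥ F t - eu' t ⬝ᵥ G' t
              + eu' t ⬝ᵥ (M' t).mulVec (dw t)
              + eu' t ⬝ᵥ (M t).mulVec (dw' t))
            - qf (A t) (eu' t))) t := by
  unfold CHBasic at hyp
  obtain ⟨hdM, hdA, _, _, hMpd, hApsd, heu, hew, hdu, hdw, hF, hG,
    _, _, _, _, _, _, hEq1, hEq2⟩ := hyp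
  intro t ht
  simp only [qf]
  have hD := hasDerivAt_dot_mulVec (hew t ht) (hew t ht) (hdA t ht)
  set c := eu' t with hc
  have hconst : HasDerivAt (fun _ : ℝ => c) (0 : Fin N → ℝ) t :=
    hasDerivAt_const t c
  have h1 := hasDerivAt_dot_mulVec hconst (hew t ht) (hdM t ht)
  have h2 := hasDerivAt_dot_mulVec hconst (heu t ht) (hdA t ht)
  have h3 := hasDerivAt_dot hconst (hG t ht)
  have h4 := hasDerivAt_dot_mulVec hconst (hdw t ht) (hdM t ht)
  have hh := ((h1.sub h2).sub h3).add h4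
  have heqOn : ∀ x ∈ Icc (0:ℝ) T,
      (c ⬝ᵥ (M x).mulVec (ew x) - c ⬝ᵥ (A x).mulVec (eu x) - c ⬝ᵥ G x
        + c ⬝ᵥ (M x).mulVec (dw x)) = c ⬝ᵥ ϑ := by
    intro x hx
    have := congrArg (fun v => c ⬝ᵥ v) (hEq2 x hx)
    simp only [dotProduct_sub, dotProduct_add] at this
    linarith
  have hzero : HasDerivWithinAt
      (fun x => c ⬝ᵥ (M x).mulVec (ew x) - c ⬝ᵥ (A x).mulVec (eu x) - c ⬝ᵥ G x
        + c ⬝ᵥ (M x).mulVec (dw x)) 0 (Icc (0:ℝ) T) t :=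
    (hasDerivWithinAt_const t _ (c ⬝ᵥ ϑ)).congr heqOn (heqOn t ht)
  have hd2 := (uniqueDiffOn_Icc hT t ht).eq_deriv _ hh.hasDerivWithinAt hzero
  simp only [zero_dotProduct, zero_add] at hd2
  have E1 := congrArg (fun v => ew' t ⬝ᵥ v) (hEq1 t ht)
  simp only [dotProduct_sub, dotProduct_add] at E1
  have sM : ew' t ⬝ᵥ (M t).mulVec c = c ⬝ᵥ (M t).mulVec (ew' t) :=
    dot_mulVec_symm (hMpd t ht).1 _ _
  have sA : ew t ⬝ᵥ (A t).mulVec (ew' t) = ew' t ⬝ᵥ (A t).mulVec (ew t) :=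
    dot_mulVec_symm (hApsd t ht).1 _ _
  convert hD using 1
  rw [sA] at *
  linarith [hd2, E1, sM]
end

section
/- For every ρ₁ > 0 there exists a constant c > 0, depending only on c_*, L and ρ₁, such that for all t ∈ [0,T]: ‖e_u'(t)‖_{M(t)}² + (1/2)·(d/dt)(‖e_w(t)‖_{M(t)}²) ≤ ρ₁·‖e_u'(t)‖_{K(t)}² + c·‖e_u(t)‖_{K(t)}² + c·‖e_w(t)‖_{K(t)}² + c·(‖d_u(t)‖_{M(t)}² + ‖d_w(t)‖_{M(t)}² + ‖d_w'(t)‖_{M(t)}²). (Energy estimate (ii.a) of the stability proof.) -/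
open Matrix Set

/-- The (semi-)norm `‖z‖_P = (zᵀ P z)^{1/2}` induced by a matrix `P`. -/
noncomputable def mnorm {N : ℕ} (P : Matrix (Fin N) (Fin N) ℝ) (z : Fin N → ℝ) : ℝ :=
  Real.sqrt (qf P z)

/-- The squared norm `‖z‖_{K}² = ‖z‖_{M}² + ‖z‖_{A}²` where `K = M + A`. -/
def kq {N : ℕ} (M A : Matrix (Fin N) (Fin N) ℝ) (z : Fin N → ℝ) : ℝ :=
  qf M z + qf A z

/-- The norm `‖z‖_{K} = (‖z‖_{M}² + ‖z‖_{A}²)^{1/2}` where `K = M + A`. -/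
noncomputable def knorm {N : ℕ} (M A : Matrix (Fin N) (Fin N) ℝ) (z : Fin N → ℝ) : ℝ :=
  Real.sqrt (kq M A z)

/-- Full hypothesis set of the stability proof: the basic error-equation setting,
the bounds `|wᵀM'(t)z| ≤ c_*‖w‖_{M(t)}‖z‖_{M(t)}`, `|wᵀA'(t)z| ≤ c_*‖w‖_{A(t)}‖z‖_{A(t)}`,
vanishing initial errors, `ϑ = M(0)d_w(0)`, and the locally-Lipschitz-type bounds on the
nonlinear differences `F`, `G` and their time derivatives. -/
def CHHyps {N : ℕ} (T cstar L : ℝ)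
    (M A M' A' : ℝ → Matrix (Fin N) (Fin N) ℝ)
    (eu ew eu' ew' du dw du' dw' F G F' G' : ℝ → Fin N → ℝ)
    (ϑ : Fin N → ℝ) : Prop :=
  CHBasic T M A M' A' eu ew eu' ew' du dw du' dw' F G F' G' ϑ ∧
  (∀ t ∈ Icc (0:ℝ) T, ∀ w z : Fin N → ℝ,
      |w ⬝ᵥ (M' t).mulVec z| ≤ cstar * mnorm (M t) w * mnorm (M t) z) ∧
  (∀ t ∈ Icc (0:ℝ) T, ∀ w z : Fin N → ℝ,
      |w ⬝ᵥ (A' t).mulVec z| ≤ cstar * mnorm (A t) w * mnorm (A t) z) ∧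
  eu 0 = 0 ∧ ew 0 = 0 ∧ ϑ = (M 0).mulVec (dw 0) ∧
  (∀ t ∈ Icc (0:ℝ) T, ∀ v : Fin N → ℝ,
      |v ⬝ᵥ F t| ≤ L * mnorm (M t) v * knorm (M t) (A t) (eu t)) ∧
  (∀ t ∈ Icc (0:ℝ) T, ∀ v : Fin N → ℝ,
      |v ⬝ᵥ G t| ≤ L * mnorm (M t) v * knorm (M t) (A t) (eu t)) ∧
  (∀ t ∈ Icc (0:ℝ) T, ∀ v : Fin N → ℝ,
      |v ⬝ᵥ F' t| ≤ L * mnorm (M t) v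
        * (knorm (M t) (A t) (eu t) + knorm (M t) (A t) (eu' t))) ∧
  (∀ t ∈ Icc (0:ℝ) T, ∀ v : Fin N → ℝ,
      |v ⬝ᵥ G' t| ≤ L * mnorm (M t) v
        * (knorm (M t) (A t) (eu t) + knorm (M t) (A t) (eu' t)))

lemma qf_nonneg {N : ℕ} {P : Matrix (Fin N) (Fin N) ℝ} (hP : P.PosSemidef)
    (z : Fin N → ℝ) : 0 ≤ qf P z := by
  have := hP.dotProduct_mulVec_nonneg z
  simpa [qf, dotProduct, mul_comm] using this

lemma mnorm_nonneg {N : ℕ} (P : Matrix (Fin N) (Fin N) ℝ) (z : Fin N → ℝ) :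
    0 ≤ mnorm P z := Real.sqrt_nonneg _

lemma mnorm_sq {N : ℕ} {P : Matrix (Fin N) (Fin N) ℝ} (hP : P.PosSemidef)
    (z : Fin N → ℝ) : mnorm P z ^ 2 = qf P z := Real.sq_sqrt (qf_nonneg hP z)

lemma dot_symm {N : ℕ} {P : Matrix (Fin N) (Fin N) ℝ} (hP : P.IsHermitian)
    (w z : Fin N → ℝ) : w ⬝ᵥ P.mulVec z = z ⬝ᵥ P.mulVec w := by
  have hPt : Pᵀ = P := by simpa [Matrix.IsHermitian, Matrix.conjTranspose_eq_transpose_of_trivial] using hP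
  rw [Matrix.dotProduct_mulVec, dotProduct_comm, ← Matrix.vecMul_transpose, hPt]

lemma cs {N : ℕ} {P : Matrix (Fin N) (Fin N) ℝ} (hP : P.PosSemidef)
    (w z : Fin N → ℝ) : |w ⬝ᵥ P.mulVec z| ≤ mnorm P w * mnorm P z := by
  have key : ∀ x : ℝ, 0 ≤ qf P w * (x * x) + (2 * (w ⬝ᵥ P.mulVec z)) * x + qf P z := by
    intro x
    have h := qf_nonneg hP (x • w + z)
    have expand : qf P (x • w + z)
        = qf P w * (x * x) + (2 * (w ⬝ᵥ P.mulVec z)) * x + qf P z := by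
      simp only [qf, Matrix.mulVec_add, Matrix.mulVec_smul, dotProduct_add,
        add_dotProduct, smul_dotProduct, dotProduct_smul,
        smul_eq_mul, dot_symm hP.1 z w]
      ring
    linarith [expand ▸ h]
  have hd := discrim_le_zero key
  rw [discrim] at hd
  have hb2 : (w ⬝ᵥ P.mulVec z) ^ 2 ≤ qf P w * qf P z := by nlinarith
  calc |w ⬝ᵥ P.mulVec z| = Real.sqrt ((w ⬝ᵥ P.mulVec z) ^ 2) :=
        (Real.sqrt_sq_eq_abs _).symm
    _ ≤ Real.sqrt (qf P w * qf P z) := Real.sqrt_le_sqrt hb2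
    _ = mnorm P w * mnorm P z := by rw [Real.sqrt_mul (qf_nonneg hP w)]; rfl

lemma young (a b ε : ℝ) (hε : 0 < ε) : a * b ≤ ε * a ^ 2 + b ^ 2 / (4 * ε) := by
  rw [← sub_nonneg]
  have h : ε * a ^ 2 + b ^ 2 / (4 * ε) - a * b = (2 * ε * a - b) ^ 2 / (4 * ε) := by
    field_simp; ring
  rw [h]; positivity

lemma hasDerivAt_bilin {N : ℕ} (P P' : Matrix (Fin N) (Fin N) ℝ)
    (Pf : ℝ → Matrix (Fin N) (Fin N) ℝ) (w z w' z' : Fin N → ℝ)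
    (wf zf : ℝ → Fin N → ℝ) (t : ℝ)
    (hP : ∀ i j, HasDerivAt (fun s => Pf s i j) (P' i j) t)
    (hPt : Pf t = P) (hwt : wf t = w) (hzt : zf t = z)
    (hw : HasDerivAt wf w' t) (hz : HasDerivAt zf z' t) :
    HasDerivAt (fun s => wf s ⬝ᵥ (Pf s).mulVec (zf s))
      (w' ⬝ᵥ P.mulVec z + w ⬝ᵥ P'.mulVec z + w ⬝ᵥ P.mulVec z') t := by
  have hwc : ∀ i : Fin N, HasDerivAt (fun s => wf s i) (w' i) t := hasDerivAt_pi.1 hw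
  have hzc : ∀ j : Fin N, HasDerivAt (fun s => zf s j) (z' j) t := hasDerivAt_pi.1 hz
  have hfun : (fun s => wf s ⬝ᵥ (Pf s).mulVec (zf s))
      = fun s => ∑ i, ∑ j, wf s i * (Pf s i j * zf s j) := by
    funext s
    simp [dotProduct, Matrix.mulVec, Finset.mul_sum]
  rw [hfun]
  have key : HasDerivAt (fun s => ∑ i, ∑ j, wf s i * (Pf s i j * zf s j))
      (∑ i, ∑ j, (w' i * (P i j * z j) + w i * (P' i j * z j + P i j * z' j))) t := by
    apply HasDerivAt.fun_sum; intro i _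
    apply HasDerivAt.fun_sum; intro j _
    have h1 := (hwc i).fun_mul ((hP i j).fun_mul (hzc j))
    simpa [hPt, hwt, hzt] using h1
  convert key using 1
  have hd : ∀ (u : Fin N → ℝ) (Q : Matrix (Fin N) (Fin N) ℝ) (v : Fin N → ℝ),
      u ⬝ᵥ Q.mulVec v = ∑ i, ∑ j, u i * (Q i j * v j) := by
    intro u Q v; simp [dotProduct, Matrix.mulVec, Finset.mul_sum]
  rw [hd, hd, hd, ← Finset.sum_add_distrib, ← Finset.sum_add_distrib]
  refine Finset.sum_congr rfl fun i _ => ?_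
  rw [← Finset.sum_add_distrib, ← Finset.sum_add_distrib]
  refine Finset.sum_congr rfl fun j _ => ?_
  ring

lemma hasDerivAt_dotvec {N : ℕ} (v : Fin N → ℝ) (zf : ℝ → Fin N → ℝ)
    (z' : Fin N → ℝ) (t : ℝ) (hz : HasDerivAt zf z' t) :
    HasDerivAt (fun s => v ⬝ᵥ zf s) (v ⬝ᵥ z') t := by
  have hzc : ∀ i : Fin N, HasDerivAt (fun s => zf s i) (z' i) t := hasDerivAt_pi.1 hz
  have hfun : (fun s => v ⬝ᵥ zf s) = fun s => ∑ i, v i * zf s i := by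
    funext s; rfl
  rw [hfun]
  exact HasDerivAt.fun_sum fun i _ => ((hzc i).const_mul (v i))

lemma eq_deriv_Icc {T : ℝ} (hT : 0 < T) {f g : ℝ → ℝ} {a b t : ℝ}
    (ht : t ∈ Icc (0:ℝ) T) (hfg : ∀ s ∈ Icc (0:ℝ) T, f s = g s)
    (hf : HasDerivAt f a t) (hg : HasDerivAt g b t) : a = b := by
  have hu : UniqueDiffWithinAt ℝ (Icc (0:ℝ) T) t := uniqueDiffOn_Icc hT t ht
  have hf' : HasDerivWithinAt f a (Icc (0:ℝ) T) t := hf.hasDerivWithinAt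
  have hg' : HasDerivWithinAt f b (Icc (0:ℝ) T) t :=
    (hg.hasDerivWithinAt).congr (fun s hs => (hfg s hs)) (hfg t ht)
  exact hu.eq_deriv _ hf' hg'

set_option maxHeartbeats 8000000 in
/-- Energy estimate (ii.a) of the stability proof: for every `ρ₁ > 0` there is `c > 0`
(depending only on `c_*`, `L` and `ρ₁`) with
`‖e_u'‖_{M(t)}² + (1/2)·(d/dt)(‖e_w‖_{M(t)}²)
  ≤ ρ₁·‖e_u'‖_{K(t)}² + c·‖e_u‖_{K(t)}² + c·‖e_w‖_{K(t)}²
    + c·(‖d_u‖_{M(t)}² + ‖d_w‖_{M(t)}² + ‖d_w'‖_{M(t)}²)` on `[0,T]`. -/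
theorem stmt8 (cstar L ρ₁ : ℝ)
    (hcstar : 0 < cstar) (hL : 0 < L) (hρ₁ : 0 < ρ₁) :
    ∃ c > (0:ℝ), ∀ (T : ℝ), 0 < T → ∀ (N : ℕ), 1 ≤ N →
      ∀ (M A M' A' : ℝ → Matrix (Fin N) (Fin N) ℝ)
        (eu ew eu' ew' du dw du' dw' F G F' G' : ℝ → Fin N → ℝ)
        (ϑ : Fin N → ℝ),
        CHHyps T cstar L M A M' A' eu ew eu' ew' du dw du' dw' F G F' G' ϑ →
        ∀ t ∈ Icc (0:ℝ) T,
          qf (M t) (eu' t) + (1/2) * deriv (fun s => qf (M s) (ew s)) t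
            ≤ ρ₁ * kq (M t) (A t) (eu' t)
              + c * kq (M t) (A t) (eu t)
              + c * kq (M t) (A t) (ew t)
              + c * (qf (M t) (du t) + qf (M t) (dw t) + qf (M t) (dw' t)) := by
  refine ⟨L^2/ρ₁ + cstar^2/ρ₁ + 1/ρ₁ + L + 2*cstar + 1, by positivity, ?_⟩
  intro T hT N hN M A M' A' eu ew eu' ew' du dw du' dw' F G F' G' ϑ hH t ht
  obtain ⟨hB, hM'b, hA'b, -, -, -, hFb, hGb, hF'b, hG'b⟩ := hH
  obtain ⟨hMd, hAd, -, -, hMpd, hApsd, heu, hew, hdu, hdw, hFd, hGd,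
    -, -, -, -, -, -, hEq1, hEq2⟩ := hB
  have hMps : (M t).PosSemidef := (hMpd t ht).posSemidef
  have hAps : (A t).PosSemidef := hApsd t ht
  have hD : HasDerivAt (fun s => qf (M s) (ew s))
      (ew' t ⬝ᵥ (M t).mulVec (ew t) + ew t ⬝ᵥ (M' t).mulVec (ew t)
        + ew t ⬝ᵥ (M t).mulVec (ew' t)) t := by
    simpa [qf] using hasDerivAt_bilin (M t) (M' t) M (ew t) (ew t) (ew' t) (ew' t)
      ew ew t (hMd t ht) rfl rfl rfl (hew t ht) (hew t ht)
  rw [hD.deriv]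
  have hsymM : ew' t ⬝ᵥ (M t).mulVec (ew t) = ew t ⬝ᵥ (M t).mulVec (ew' t) :=
    dot_symm hMps.1 (ew' t) (ew t)
  have hid1 : eu' t ⬝ᵥ (M t).mulVec (eu' t) + eu' t ⬝ᵥ (A t).mulVec (ew t)
      = eu' t ⬝ᵥ F t - eu' t ⬝ᵥ (M' t).mulVec (eu t) - eu' t ⬝ᵥ (M t).mulVec (du t) := by
    have h := congrArg (fun v => eu' t ⬝ᵥ v) (hEq1 t ht)
    simpa [dotProduct_add, dotProduct_sub] using h
  have hid2 : ew t ⬝ᵥ (M' t).mulVec (ew t) + ew t ⬝ᵥ (M t).mulVec (ew' t)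
        - (ew t ⬝ᵥ (A' t).mulVec (eu t) + ew t ⬝ᵥ (A t).mulVec (eu' t))
      = ew t ⬝ᵥ G' t - (ew t ⬝ᵥ (M' t).mulVec (dw t) + ew t ⬝ᵥ (M t).mulVec (dw' t)) := by
    have hf : HasDerivAt
        (fun s => ew t ⬝ᵥ (M s).mulVec (ew s) - ew t ⬝ᵥ (A s).mulVec (eu s))
        ((0 : Fin N → ℝ) ⬝ᵥ (M t).mulVec (ew t) + ew t ⬝ᵥ (M' t).mulVec (ew t)
            + ew t ⬝ᵥ (M t).mulVec (ew' t)
          - ((0 : Fin N → ℝ) ⬝ᵥ (A t).mulVec (eu t) + ew t ⬝ᵥ (A' t).mulVec (eu t)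
            + ew t ⬝ᵥ (A t).mulVec (eu' t))) t :=
      (hasDerivAt_bilin (M t) (M' t) M (ew t) (ew t) 0 (ew' t)
          (fun _ => ew t) ew t (hMd t ht) rfl rfl rfl (hasDerivAt_const t _) (hew t ht)).sub
        (hasDerivAt_bilin (A t) (A' t) A (ew t) (eu t) 0 (eu' t)
          (fun _ => ew t) eu t (hAd t ht) rfl rfl rfl (hasDerivAt_const t _) (heu t ht))
    have hg : HasDerivAt
        (fun s => ew t ⬝ᵥ G s - ew t ⬝ᵥ (M s).mulVec (dw s) + ew t ⬝ᵥ ϑ)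
        (ew t ⬝ᵥ G' t - ((0 : Fin N → ℝ) ⬝ᵥ (M t).mulVec (dw t)
            + ew t ⬝ᵥ (M' t).mulVec (dw t) + ew t ⬝ᵥ (M t).mulVec (dw' t))) t := by
      have h := ((hasDerivAt_dotvec (ew t) G (G' t) t (hGd t ht)).sub
        (hasDerivAt_bilin (M t) (M' t) M (ew t) (dw t) 0 (dw' t)
          (fun _ => ew t) dw t (hMd t ht) rfl rfl rfl (hasDerivAt_const t _)
          (hdw t ht))).add_const (ew t ⬝ᵥ ϑ)
      simpa using h
    have heqon : ∀ s ∈ Icc (0:ℝ) T,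
        (fun s => ew t ⬝ᵥ (M s).mulVec (ew s) - ew t ⬝ᵥ (A s).mulVec (eu s)) s
          = (fun s => ew t ⬝ᵥ G s - ew t ⬝ᵥ (M s).mulVec (dw s) + ew t ⬝ᵥ ϑ) s := by
      intro s hs
      have h := congrArg (fun v => ew t ⬝ᵥ v) (hEq2 s hs)
      simpa [dotProduct_add, dotProduct_sub] using h
    have key := eq_deriv_Icc hT ht heqon hf hg
    simpa [zero_dotProduct] using key
  have hsymA : ew t ⬝ᵥ (A t).mulVec (eu' t) = eu' t ⬝ᵥ (A t).mulVec (ew t) :=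
    dot_symm hAps.1 (ew t) (eu' t)
  set p := mnorm (M t) (eu' t) with hpdef
  set q := knorm (M t) (A t) (eu t) with hqdef
  set r := mnorm (M t) (ew t) with hrdef
  set rA := mnorm (A t) (ew t) with hrAdef
  set pk := knorm (M t) (A t) (eu' t) with hpkdef
  have hp0 : 0 ≤ p := Real.sqrt_nonneg _
  have hq0 : 0 ≤ q := Real.sqrt_nonneg _
  have hr0 : 0 ≤ r := Real.sqrt_nonneg _
  have hrA0 : 0 ≤ rA := Real.sqrt_nonneg _
  have hpk0 : 0 ≤ pk := Real.sqrt_nonneg _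
  have hKP : pk ^ 2 = kq (M t) (A t) (eu' t) :=
    Real.sq_sqrt (add_nonneg (qf_nonneg hMps _) (qf_nonneg hAps _))
  have hQ : q ^ 2 = kq (M t) (A t) (eu t) :=
    Real.sq_sqrt (add_nonneg (qf_nonneg hMps _) (qf_nonneg hAps _))
  have hp2 : p ^ 2 = qf (M t) (eu' t) := mnorm_sq hMps _
  have hr2 : r ^ 2 = qf (M t) (ew t) := mnorm_sq hMps _
  have hrA2 : rA ^ 2 = qf (A t) (ew t) := mnorm_sq hAps _
  have hppk : p ^ 2 ≤ pk ^ 2 := by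
    rw [hp2, hKP]; exact le_add_of_nonneg_right (qf_nonneg hAps _)
  have hr_le : r ^ 2 ≤ kq (M t) (A t) (ew t) := by
    rw [hr2]; exact le_add_of_nonneg_right (qf_nonneg hAps _)
  have hrA_le : rA ^ 2 ≤ kq (M t) (A t) (ew t) := by
    rw [hrA2]; exact le_add_of_nonneg_left (qf_nonneg hMps _)
  have hqMeu : mnorm (M t) (eu t) ≤ q := by
    rw [hqdef]
    exact Real.sqrt_le_sqrt (le_add_of_nonneg_right (qf_nonneg hAps _))
  have hqAeu : mnorm (A t) (eu t) ≤ q := by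
    rw [hqdef]
    exact Real.sqrt_le_sqrt (le_add_of_nonneg_left (qf_nonneg hMps _))
  have hρ4 : (0:ℝ) < ρ₁/4 := by positivity
  have hb1 : eu' t ⬝ᵥ F t ≤ ρ₁/4 * p^2 + L^2/ρ₁ * q^2 := by
    have h := hFb t ht (eu' t)
    have hy := young p (L*q) (ρ₁/4) hρ4
    have e1 : 4*(ρ₁/4) = ρ₁ := by ring
    rw [e1] at hy
    have e2 : (L*q)^2/ρ₁ = L^2/ρ₁*q^2 := by ring
    rw [e2] at hy
    calc eu' t ⬝ᵥ F t ≤ |eu' t ⬝ᵥ F t| := le_abs_self _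
      _ ≤ L * p * q := h
      _ = p * (L*q) := by ring
      _ ≤ ρ₁/4 * p^2 + L^2/ρ₁*q^2 := hy
  have hb2 : -(eu' t ⬝ᵥ (M' t).mulVec (eu t)) ≤ ρ₁/4 * p^2 + cstar^2/ρ₁ * q^2 := by
    have h := hM'b t ht (eu' t) (eu t)
    have hy := young p (cstar*q) (ρ₁/4) hρ4
    have e1 : 4*(ρ₁/4) = ρ₁ := by ring
    rw [e1] at hy
    have e2 : (cstar*q)^2/ρ₁ = cstar^2/ρ₁*q^2 := by ring
    rw [e2] at hy
    calc -(eu' t ⬝ᵥ (M' t).mulVec (eu t))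
        ≤ |eu' t ⬝ᵥ (M' t).mulVec (eu t)| := neg_le_abs _
      _ ≤ cstar * p * mnorm (M t) (eu t) := h
      _ ≤ cstar * p * q := mul_le_mul_of_nonneg_left hqMeu (by positivity)
      _ = p * (cstar*q) := by ring
      _ ≤ ρ₁/4 * p^2 + cstar^2/ρ₁*q^2 := hy
  have hb3 : -(eu' t ⬝ᵥ (M t).mulVec (du t)) ≤ ρ₁/4 * p^2 + 1/ρ₁ * qf (M t) (du t) := by
    have h := cs hMps (eu' t) (du t)
    have hy := young p (mnorm (M t) (du t)) (ρ₁/4) hρ4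
    have e1 : 4*(ρ₁/4) = ρ₁ := by ring
    rw [e1, mnorm_sq hMps (du t)] at hy
    have e3 : qf (M t) (du t)/ρ₁ = 1/ρ₁ * qf (M t) (du t) := by ring
    rw [e3] at hy
    calc -(eu' t ⬝ᵥ (M t).mulVec (du t))
        ≤ |eu' t ⬝ᵥ (M t).mulVec (du t)| := neg_le_abs _
      _ ≤ p * mnorm (M t) (du t) := h
      _ ≤ ρ₁/4 * p^2 + 1/ρ₁ * qf (M t) (du t) := hy
  have hb4 : ew t ⬝ᵥ G' t
      ≤ ρ₁/4 * pk^2 + L^2/ρ₁ * r^2 + L/2 * r^2 + L/2 * q^2 := by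
    have h := hG'b t ht (ew t)
    have hy := young pk (L*r) (ρ₁/4) hρ4
    have e1 : 4*(ρ₁/4) = ρ₁ := by ring
    rw [e1] at hy
    have e2 : (L*r)^2/ρ₁ = L^2/ρ₁*r^2 := by ring
    rw [e2] at hy
    have hrq : r * q ≤ r^2/2 + q^2/2 := by nlinarith [sq_nonneg (r-q)]
    have hrq' : L * (r*q) ≤ L * (r^2/2 + q^2/2) :=
      mul_le_mul_of_nonneg_left hrq hL.le
    calc ew t ⬝ᵥ G' t ≤ |ew t ⬝ᵥ G' t| := le_abs_self _
      _ ≤ L * r * (q + pk) := h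
      _ = L * (r*q) + pk * (L*r) := by ring
      _ ≤ L * (r^2/2 + q^2/2) + (ρ₁/4 * pk^2 + L^2/ρ₁*r^2) := add_le_add hrq' hy
      _ = ρ₁/4 * pk^2 + L^2/ρ₁*r^2 + L/2*r^2 + L/2*q^2 := by ring
  have hb5 : -(ew t ⬝ᵥ (M' t).mulVec (dw t))
      ≤ cstar/2 * r^2 + cstar/2 * qf (M t) (dw t) := by
    have h := hM'b t ht (ew t) (dw t)
    have hy : r * mnorm (M t) (dw t) ≤ r^2/2 + (mnorm (M t) (dw t))^2/2 := by
      nlinarith [sq_nonneg (r - mnorm (M t) (dw t))]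
    have hy' := mul_le_mul_of_nonneg_left hy hcstar.le
    rw [mnorm_sq hMps (dw t)] at hy'
    calc -(ew t ⬝ᵥ (M' t).mulVec (dw t))
        ≤ |ew t ⬝ᵥ (M' t).mulVec (dw t)| := neg_le_abs _
      _ ≤ cstar * r * mnorm (M t) (dw t) := h
      _ = cstar * (r * mnorm (M t) (dw t)) := by ring
      _ ≤ cstar * (r^2/2 + qf (M t) (dw t)/2) := hy'
      _ = cstar/2 * r^2 + cstar/2 * qf (M t) (dw t) := by ring
  have hb6 : -(ew t ⬝ᵥ (M t).mulVec (dw' t)) ≤ r^2/2 + qf (M t) (dw' t)/2 := by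
    have h := cs hMps (ew t) (dw' t)
    have hy : r * mnorm (M t) (dw' t) ≤ r^2/2 + (mnorm (M t) (dw' t))^2/2 := by
      nlinarith [sq_nonneg (r - mnorm (M t) (dw' t))]
    rw [mnorm_sq hMps (dw' t)] at hy
    calc -(ew t ⬝ᵥ (M t).mulVec (dw' t))
        ≤ |ew t ⬝ᵥ (M t).mulVec (dw' t)| := neg_le_abs _
      _ ≤ r * mnorm (M t) (dw' t) := h
      _ ≤ r^2/2 + qf (M t) (dw' t)/2 := hy
  have hb7 : -(ew t ⬝ᵥ (M' t).mulVec (ew t)) ≤ cstar * r^2 := by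
    have h := hM'b t ht (ew t) (ew t)
    calc -(ew t ⬝ᵥ (M' t).mulVec (ew t))
        ≤ |ew t ⬝ᵥ (M' t).mulVec (ew t)| := neg_le_abs _
      _ ≤ cstar * r * r := h
      _ = cstar * r^2 := by ring
  have hb8 : ew t ⬝ᵥ (A' t).mulVec (eu t) ≤ cstar/2 * rA^2 + cstar/2 * q^2 := by
    have h := hA'b t ht (ew t) (eu t)
    have hy : rA * q ≤ rA^2/2 + q^2/2 := by nlinarith [sq_nonneg (rA - q)]
    have hy' := mul_le_mul_of_nonneg_left hy hcstar.le
    calc ew t ⬝ᵥ (A' t).mulVec (eu t) ≤ |ew t ⬝ᵥ (A' t).mulVec (eu t)| := le_abs_self _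
      _ ≤ cstar * rA * mnorm (A t) (eu t) := h
      _ ≤ cstar * rA * q := mul_le_mul_of_nonneg_left hqAeu (by positivity)
      _ = cstar * (rA * q) := by ring
      _ ≤ cstar * (rA^2/2 + q^2/2) := hy'
      _ = cstar/2 * rA^2 + cstar/2 * q^2 := by ring
  set c := L^2/ρ₁ + cstar^2/ρ₁ + 1/ρ₁ + L + 2*cstar + 1 with hcdef
  have hinv : (0:ℝ) < 1/ρ₁ := by positivity
  have hA1 : (0:ℝ) < cstar^2/ρ₁ := by positivity
  have hA2 : (0:ℝ) < L^2/ρ₁ := by positivity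
  have hQnn : 0 ≤ kq (M t) (A t) (eu t) :=
    add_nonneg (qf_nonneg hMps _) (qf_nonneg hAps _)
  have hRnn : 0 ≤ kq (M t) (A t) (ew t) :=
    add_nonneg (qf_nonneg hMps _) (qf_nonneg hAps _)
  have hDU : 0 ≤ qf (M t) (du t) := qf_nonneg hMps _
  have hDW : 0 ≤ qf (M t) (dw t) := qf_nonneg hMps _
  have hDW'0 : 0 ≤ qf (M t) (dw' t) := qf_nonneg hMps _
  have hcQ : (L^2/ρ₁ + cstar^2/ρ₁ + L/2 + cstar) * q^2 ≤ c * kq (M t) (A t) (eu t) := by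
    rw [← hQ]
    exact mul_le_mul_of_nonneg_right (by rw [hcdef]; linarith) (sq_nonneg q)
  have hcR : (L^2/ρ₁ + L/2 + cstar/2 + 1/2 + cstar + cstar/2) * kq (M t) (A t) (ew t)
      ≤ c * kq (M t) (A t) (ew t) := by
    apply mul_le_mul_of_nonneg_right _ hRnn
    rw [hcdef]; linarith
  have hrsum : (L^2/ρ₁ + L/2 + cstar/2 + 1/2 + cstar) * r^2
      ≤ (L^2/ρ₁ + L/2 + cstar/2 + 1/2 + cstar) * kq (M t) (A t) (ew t) :=
    mul_le_mul_of_nonneg_left hr_le (by positivity)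
  have hrAsum : (cstar/2) * rA^2 ≤ (cstar/2) * kq (M t) (A t) (ew t) :=
    mul_le_mul_of_nonneg_left hrA_le (by positivity)
  have hcDU : (1/ρ₁) * qf (M t) (du t) ≤ c * qf (M t) (du t) := by
    apply mul_le_mul_of_nonneg_right _ hDU
    rw [hcdef]; linarith
  have hcDW : (cstar/2) * qf (M t) (dw t) ≤ c * qf (M t) (dw t) := by
    apply mul_le_mul_of_nonneg_right _ hDW
    rw [hcdef]; linarith
  have hcDW' : (1/2) * qf (M t) (dw' t) ≤ c * qf (M t) (dw' t) := by
    apply mul_le_mul_of_nonneg_right _ hDW'0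
    rw [hcdef]; linarith
  have hpk4 : ρ₁/4 * p^2 ≤ ρ₁/4 * pk^2 := mul_le_mul_of_nonneg_left hppk (by positivity)
  have hpkK : ρ₁ * pk^2 = ρ₁ * kq (M t) (A t) (eu' t) := by rw [hKP]
  have hqfM : qf (M t) (eu' t) = eu' t ⬝ᵥ (M t).mulVec (eu' t) := rfl
  have hmain : qf (M t) (eu' t)
        + 1/2 * (ew' t ⬝ᵥ (M t).mulVec (ew t) + ew t ⬝ᵥ (M' t).mulVec (ew t)
          + ew t ⬝ᵥ (M t).mulVec (ew' t))
      = eu' t ⬝ᵥ F t - eu' t ⬝ᵥ (M' t).mulVec (eu t) - eu' t ⬝ᵥ (M t).mulVec (du t)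
        + ew t ⬝ᵥ G' t - ew t ⬝ᵥ (M' t).mulVec (dw t) - ew t ⬝ᵥ (M t).mulVec (dw' t)
        - 1/2 * (ew t ⬝ᵥ (M' t).mulVec (ew t)) + ew t ⬝ᵥ (A' t).mulVec (eu t) := by
    rw [hqfM]; linear_combination hid1 + hid2 + (1/2) * hsymM + hsymA
  rw [hmain]
  have hstep : eu' t ⬝ᵥ F t - eu' t ⬝ᵥ (M' t).mulVec (eu t) - eu' t ⬝ᵥ (M t).mulVec (du t)
        + ew t ⬝ᵥ G' t - ew t ⬝ᵥ (M' t).mulVec (dw t) - ew t ⬝ᵥ (M t).mulVec (dw' t)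
        - 1/2 * (ew t ⬝ᵥ (M' t).mulVec (ew t)) + ew t ⬝ᵥ (A' t).mulVec (eu t)
      ≤ (3 * (ρ₁/4)) * p^2 + ρ₁/4 * pk^2
        + (L^2/ρ₁ + cstar^2/ρ₁ + L/2 + cstar) * q^2
        + (L^2/ρ₁ + L/2 + cstar/2 + 1/2 + cstar) * r^2 + (cstar/2) * rA^2
        + (1/ρ₁) * qf (M t) (du t) + (cstar/2) * qf (M t) (dw t)
        + (1/2) * qf (M t) (dw' t) := by
    linarith only [hb1, hb2, hb3, hb4, hb5, hb6, hb7, hb8, sq_nonneg q, sq_nonneg r,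
      mul_nonneg hcstar.le (sq_nonneg q), mul_nonneg hcstar.le (sq_nonneg r)]
  refine hstep.trans ?_
  linarith only [hpk4, hpkK, hcQ, hcR, hrsum, hrAsum, hcDU, hcDW, hcDW']
end
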